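/- arXiv:2107.14581 — 3 statements merged into one kernel-verified Lean document; each statement's English description precedes it below -/
import Mathlib

section
/- Let C be a deterministic HOPT with no correlations with single-state objects, and let A, A', B, B' be causal objects with unique effects ⊥_A, ⊥_{A'}, ⊥_B, ⊥_{B'}. For every state f : I ⟶ (A ⇒ A') ⊗ (B ⇒ B'), let g : A ⊗ B ⟶ A' ⊗ B' be the induced bipartite process, i.e. g = λ⁻¹ ≫ (f ⊗ id_{A⊗B}) ≫ (middle-four interchange) ≫ (ε_{A,A'} ⊗ ε_{B,B'}). Then there exist f_A : A ⟶ A' and f_B : B ⟶ B' such that g ≫ (⊥_{A'} ⊗ id_{B'}) = ⊥_A ⊗ f_B and g ≫ (id_{A'} ⊗ ⊥_{B'}) = f_A ⊗ ⊥_B (as morphisms A ⊗ B ⟶ I ⊗ B' and A ⊗ B ⟶ A' ⊗ I respectively); that is, g is a non-signalling bipartite channel. -/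
open CategoryTheory MonoidalCategory

universe v u

/-- A higher order process theory (HOPT): a symmetric monoidal category equipped with
internal-hom objects `hom A B` (written `A ⇒ B`), evaluation (insertion) morphisms
`ε_{A,B} : (A ⇒ B) ⊗ A ⟶ B`, and, for every `f : X ⊗ A ⟶ B`, a unique currying
`f̄ : X ⟶ (A ⇒ B)` with `(f̄ ⊗ 𝟙 A) ≫ ε_{A,B} = f`. -/
structure HOPT (C : Type u) [Category.{v} C] [MonoidalCategory C] [SymmetricCategory C] where
  hom : C → C → C
  ev : ∀ A B : C, hom A B ⊗ A ⟶ B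
  curry : ∀ {X A B : C}, (X ⊗ A ⟶ B) → (X ⟶ hom A B)
  curry_ev : ∀ {X A B : C} (f : X ⊗ A ⟶ B), (curry f ⊗ₘ 𝟙 A) ≫ ev A B = f
  curry_unique : ∀ {X A B : C} {f : X ⊗ A ⟶ B} {g : X ⟶ hom A B},
    (g ⊗ₘ 𝟙 A) ≫ ev A B = f → g = curry f

namespace HOPT

variable {C : Type u} [Category.{v} C] [MonoidalCategory C] [SymmetricCategory C] (H : HOPT C)

/-- The dualising process `d_A : A ⟶ ((A ⇒ I) ⇒ I)`, i.e. the unique morphism with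
`(d_A ⊗ 𝟙) ≫ ε_{A⇒I,I} = β_{A,A⇒I} ≫ ε_{A,I}`. -/
def dual (A : C) : A ⟶ H.hom (H.hom A (𝟙_ C)) (𝟙_ C) :=
  H.curry ((β_ A (H.hom A (𝟙_ C))).hom ≫ H.ev A (𝟙_ C))

/-- Double evaluation `((A ⇒ B) ⊗ (B ⇒ D)) ⊗ A ⟶ D`: after rearranging by associators and
braidings, evaluate the `(A ⇒ B)`-factor on the `A`-factor via `ε_{A,B}`, then evaluate the
`(B ⇒ D)`-factor on the result via `ε_{B,D}`. -/
def doubleEval (A B D : C) : (H.hom A B ⊗ H.hom B D) ⊗ A ⟶ D :=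
  (α_ _ _ _).hom ≫ (𝟙 (H.hom A B) ⊗ₘ (β_ (H.hom B D) A).hom) ≫ (α_ _ _ _).inv ≫
    (H.ev A B ⊗ₘ 𝟙 (H.hom B D)) ≫ (β_ B (H.hom B D)).hom ≫ H.ev B D

/-- The lifting process `T_{A,B} : (A ⇒ B) ⟶ ((B ⇒ I) ⇒ (A ⇒ I))`, i.e. the unique morphism
whose double uncurrying is the double evaluation `doubleEval A B I`. -/
def lift (A B : C) : H.hom A B ⟶ H.hom (H.hom B (𝟙_ C)) (H.hom A (𝟙_ C)) :=
  H.curry (H.curry (H.doubleEval A B (𝟙_ C)))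

/-- The static currying `φ : (X ⇒ (A ⇒ B)) ⟶ ((X ⊗ A) ⇒ B)`, i.e. the unique morphism whose
uncurrying reassociates, evaluates the `(X ⇒ (A ⇒ B))`-factor on the `X`-factor via
`ε_{X,A⇒B}`, and then evaluates the result on the `A`-factor via `ε_{A,B}`. -/
def staticCurry (X A B : C) : H.hom X (H.hom A B) ⟶ H.hom (X ⊗ A) B :=
  H.curry ((α_ (H.hom X (H.hom A B)) X A).inv ≫ (H.ev X (H.hom A B) ⊗ₘ 𝟙 A) ≫ H.ev A B)

end HOPT

/-- A process theory is deterministic if it has exactly one scalar. -/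
def Deterministic (C : Type u) [Category.{v} C] [MonoidalCategory C] : Prop :=
  ∀ s t : 𝟙_ C ⟶ 𝟙_ C, s = t

/-- An object is causal if it has exactly one effect. -/
def Causal {C : Type u} [Category.{v} C] [MonoidalCategory C] (A : C) : Prop :=
  ∃! _e : A ⟶ 𝟙_ C, True

/-- A theory has no correlations with single-state objects if every joint state with a
single-state object is a product state. -/
def NoCorrelations (C : Type u) [Category.{v} C] [MonoidalCategory C] : Prop :=
  ∀ Y : C, (∃! _π : 𝟙_ C ⟶ Y, True) →
    ∀ (X : C) (ρ : 𝟙_ C ⟶ X ⊗ Y), ∃ (ρ' : 𝟙_ C ⟶ X) (π : 𝟙_ C ⟶ Y),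
      ρ = (λ_ (𝟙_ C)).inv ≫ (ρ' ⊗ₘ π)

/-!
Discarding the output `A'` of `g` is the same as first postcomposing the `A ⇒ A'` factor of `f`
with the effect on `A'`, which turns `f` into a joint state of `(A ⇒ I) ⊗ (B ⇒ B')`. Since `A` is
causal, `A ⇒ I` has a single state, so this joint state is a product `π ⊗ ρ`. Plugging `π` into
the evaluation gives an effect on `A`, necessarily `⊥_A`, and plugging in `ρ` gives `f_B`.
Discarding `B'` is symmetric.
-/

section Bipartite

variable {C : Type u} [Category.{v} C] [MonoidalCategory C] [BraidedCategory C]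

def bipartiteEval {P Q A B A'' B'' : C} (ρ : 𝟙_ C ⟶ P ⊗ Q) (p : P ⊗ A ⟶ A'')
    (q : Q ⊗ B ⟶ B'') : A ⊗ B ⟶ A'' ⊗ B'' :=
  (λ_ (A ⊗ B)).inv ≫ (ρ ⊗ₘ 𝟙 (A ⊗ B)) ≫ tensorμ P Q A B ≫ (p ⊗ₘ q)

def stateEval {P A A'' : C} (π : 𝟙_ C ⟶ P) (p : P ⊗ A ⟶ A'') : A ⟶ A'' :=
  (λ_ A).inv ≫ (π ⊗ₘ 𝟙 A) ≫ p

variable {P Q A B A'' B'' : C}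

lemma bipartiteEval_comp_tensorHom {A''' B''' : C} (ρ : 𝟙_ C ⟶ P ⊗ Q) (p : P ⊗ A ⟶ A'')
    (q : Q ⊗ B ⟶ B'') (u : A'' ⟶ A''') (v : B'' ⟶ B''') :
    bipartiteEval ρ p q ≫ (u ⊗ₘ v) = bipartiteEval ρ (p ≫ u) (q ≫ v) := by
  simp only [bipartiteEval, Category.assoc, tensorHom_comp_tensorHom]

lemma bipartiteEval_state_comp_tensorHom {P' Q' : C} (ρ : 𝟙_ C ⟶ P ⊗ Q) (k : P ⟶ P')
    (l : Q ⟶ Q') (p : P' ⊗ A ⟶ A'') (q : Q' ⊗ B ⟶ B'') :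
    bipartiteEval (ρ ≫ (k ⊗ₘ l)) p q = bipartiteEval ρ ((k ⊗ₘ 𝟙 A) ≫ p) ((l ⊗ₘ 𝟙 B) ≫ q) := by
  have := tensorμ_natural_assoc k l (𝟙 A) (𝟙 B) (p ⊗ₘ q)
  simp only [id_tensorHom_id, tensorHom_comp_tensorHom] at this
  rw [bipartiteEval, bipartiteEval, ← this, tensorHom_id, tensorHom_id, tensorHom_id,
    comp_whiskerRight, Category.assoc]

lemma leftUnitor_inv_whiskerRight_tensorμ (A B : C) :
    (λ_ (A ⊗ B)).inv ≫ (λ_ (𝟙_ C)).inv ▷ (A ⊗ B) ≫ tensorμ (𝟙_ C) (𝟙_ C) A B =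
      (λ_ A).inv ⊗ₘ (λ_ B).inv := by
  rw [Iso.inv_comp_eq, tensor_left_unitality_assoc, tensorHom_comp_tensorHom]
  simp

lemma bipartiteEval_product (π : 𝟙_ C ⟶ P) (σ : 𝟙_ C ⟶ Q) (p : P ⊗ A ⟶ A'')
    (q : Q ⊗ B ⟶ B'') :
    bipartiteEval ((λ_ (𝟙_ C)).inv ≫ (π ⊗ₘ σ)) p q = stateEval π p ⊗ₘ stateEval σ q := by
  rw [bipartiteEval_state_comp_tensorHom, bipartiteEval, tensorHom_id,
    reassoc_of% leftUnitor_inv_whiskerRight_tensorμ, tensorHom_comp_tensorHom]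
  rfl

end Bipartite

lemma NoCorrelations.exists_eq_tensorHom_left {C : Type u} [Category.{v} C] [MonoidalCategory C]
    [BraidedCategory C] (hnc : NoCorrelations C) {Y : C} (hY : ∃! _π : 𝟙_ C ⟶ Y, True) {X : C}
    (ρ : 𝟙_ C ⟶ Y ⊗ X) : ∃ (π : 𝟙_ C ⟶ Y) (ρ' : 𝟙_ C ⟶ X), ρ = (λ_ (𝟙_ C)).inv ≫ (π ⊗ₘ ρ') := by
  obtain ⟨ρ', π, h⟩ := hnc Y hY X (ρ ≫ (β_ Y X).hom)
  refine ⟨π, ρ', ?_⟩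
  rw [← Iso.eq_comp_inv] at h
  rw [h, Category.assoc, BraidedCategory.braiding_inv_naturality, ← Category.assoc,
    braiding_inv_tensorUnit_left, ← unitors_equal, Iso.inv_hom_id_assoc]

namespace HOPT

variable {C : Type u} [Category.{v} C] [MonoidalCategory C] [SymmetricCategory C] (H : HOPT C)

lemma ext_of_ev_eq {X A B : C} {g g' : X ⟶ H.hom A B}
    (h : (g ⊗ₘ 𝟙 A) ≫ H.ev A B = (g' ⊗ₘ 𝟙 A) ≫ H.ev A B) : g = g' :=
  (H.curry_unique h).trans (H.curry_unique rfl).symm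

lemma existsUnique_state_hom_unit {X : C} (bX : X ⟶ 𝟙_ C) (hX : ∀ e : X ⟶ 𝟙_ C, e = bX) :
    ∃! _π : 𝟙_ C ⟶ H.hom X (𝟙_ C), True := by
  refine ⟨H.curry ((λ_ X).hom ≫ bX), trivial, fun π _ => H.ext_of_ev_eq ?_⟩
  rw [H.curry_ev, ← cancel_epi (λ_ X).inv, Iso.inv_hom_id_assoc]
  exact hX _

def postcomp (A : C) {B B' : C} (e : B ⟶ B') : H.hom A B ⟶ H.hom A B' :=
  H.curry (H.ev A B ≫ e)

lemma postcomp_ev (A : C) {B B' : C} (e : B ⟶ B') :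
    (H.postcomp A e ⊗ₘ 𝟙 A) ≫ H.ev A B' = H.ev A B ≫ e :=
  H.curry_ev _

lemma exists_bipartiteEval_ev_comp_effect_tensor_id (hnc : NoCorrelations C) {A A' B B' : C}
    (bA : A ⟶ 𝟙_ C) (hA : ∀ e : A ⟶ 𝟙_ C, e = bA) (e : A' ⟶ 𝟙_ C)
    (f : 𝟙_ C ⟶ H.hom A A' ⊗ H.hom B B') :
    ∃ fB : B ⟶ B', bipartiteEval f (H.ev A A') (H.ev B B') ≫ (e ⊗ₘ 𝟙 B') = bA ⊗ₘ fB := by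
  obtain ⟨π, ρ, hρ⟩ := hnc.exists_eq_tensorHom_left (H.existsUnique_state_hom_unit bA hA)
    (f ≫ (H.postcomp A e ⊗ₘ 𝟙 _))
  refine ⟨stateEval ρ (H.ev B B'), ?_⟩
  calc bipartiteEval f (H.ev A A') (H.ev B B') ≫ (e ⊗ₘ 𝟙 B')
      = bipartiteEval f ((H.postcomp A e ⊗ₘ 𝟙 A) ≫ H.ev A (𝟙_ C))
          ((𝟙 _ ⊗ₘ 𝟙 B) ≫ H.ev B B') := by
        rw [bipartiteEval_comp_tensorHom, postcomp_ev, id_tensorHom_id, Category.id_comp,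
          Category.comp_id]
    _ = bipartiteEval (f ≫ (H.postcomp A e ⊗ₘ 𝟙 _)) (H.ev A (𝟙_ C)) (H.ev B B') :=
        (bipartiteEval_state_comp_tensorHom _ _ _ _ _).symm
    _ = stateEval π (H.ev A (𝟙_ C)) ⊗ₘ stateEval ρ (H.ev B B') := by
        rw [hρ, bipartiteEval_product]
    _ = bA ⊗ₘ stateEval ρ (H.ev B B') := by rw [hA (stateEval π _)]

lemma exists_bipartiteEval_ev_comp_id_tensor_effect (hnc : NoCorrelations C) {A A' B B' : C}
    (bB : B ⟶ 𝟙_ C) (hB : ∀ e : B ⟶ 𝟙_ C, e = bB) (e : B' ⟶ 𝟙_ C)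
    (f : 𝟙_ C ⟶ H.hom A A' ⊗ H.hom B B') :
    ∃ fA : A ⟶ A', bipartiteEval f (H.ev A A') (H.ev B B') ≫ (𝟙 A' ⊗ₘ e) = fA ⊗ₘ bB := by
  obtain ⟨ρ, π, hρ⟩ := hnc _ (H.existsUnique_state_hom_unit bB hB) _
    (f ≫ (𝟙 _ ⊗ₘ H.postcomp B e))
  refine ⟨stateEval ρ (H.ev A A'), ?_⟩
  calc bipartiteEval f (H.ev A A') (H.ev B B') ≫ (𝟙 A' ⊗ₘ e)
      = bipartiteEval f ((𝟙 _ ⊗ₘ 𝟙 A) ≫ H.ev A A')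
          ((H.postcomp B e ⊗ₘ 𝟙 B) ≫ H.ev B (𝟙_ C)) := by
        rw [bipartiteEval_comp_tensorHom, postcomp_ev, id_tensorHom_id, Category.id_comp,
          Category.comp_id]
    _ = bipartiteEval (f ≫ (𝟙 _ ⊗ₘ H.postcomp B e)) (H.ev A A') (H.ev B (𝟙_ C)) :=
        (bipartiteEval_state_comp_tensorHom _ _ _ _ _).symm
    _ = stateEval ρ (H.ev A A') ⊗ₘ stateEval π (H.ev B (𝟙_ C)) := by
        rw [hρ, bipartiteEval_product]
    _ = stateEval ρ (H.ev A A') ⊗ₘ bB := by rw [hB (stateEval π _)]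

end HOPT

theorem stmt6_general {C : Type u} [Category.{v} C] [MonoidalCategory C] [SymmetricCategory C]
    (H : HOPT C) (hnc : NoCorrelations C)
    (A A' B B' : C)
    (bA : A ⟶ 𝟙_ C) (bA' : A' ⟶ 𝟙_ C) (bB : B ⟶ 𝟙_ C) (bB' : B' ⟶ 𝟙_ C)
    (hA : ∀ e : A ⟶ 𝟙_ C, e = bA)
    (hB : ∀ e : B ⟶ 𝟙_ C, e = bB)
    (f : 𝟙_ C ⟶ H.hom A A' ⊗ H.hom B B')
    (g : A ⊗ B ⟶ A' ⊗ B')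
    (hg : g = (λ_ (A ⊗ B)).inv ≫ (f ⊗ₘ 𝟙 (A ⊗ B)) ≫
      tensorμ (H.hom A A') (H.hom B B') A B ≫ (H.ev A A' ⊗ₘ H.ev B B')) :
    ∃ (fA : A ⟶ A') (fB : B ⟶ B'),
      g ≫ (bA' ⊗ₘ 𝟙 B') = bA ⊗ₘ fB ∧ g ≫ (𝟙 A' ⊗ₘ bB') = fA ⊗ₘ bB := by
  obtain ⟨fB, hfB⟩ := H.exists_bipartiteEval_ev_comp_effect_tensor_id hnc bA hA bA' f
  obtain ⟨fA, hfA⟩ := H.exists_bipartiteEval_ev_comp_id_tensor_effect hnc bB hB bB' f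
  subst hg
  exact ⟨fA, fB, hfB, hfA⟩

/-- in a deterministic HOPT with no correlations with single-state objects, for
causal objects `A, A', B, B'` with unique effects `⊥_A, ⊥_{A'}, ⊥_B, ⊥_{B'}`, every state
`f : I ⟶ (A ⇒ A') ⊗ (B ⇒ B')` induces a bipartite process `g : A ⊗ B ⟶ A' ⊗ B'` which is a
non-signalling bipartite channel. -/
theorem stmt6 {C : Type u} [Category.{v} C] [MonoidalCategory C] [SymmetricCategory C]
    (H : HOPT C) (hdet : Deterministic C) (hnc : NoCorrelations C)
    (A A' B B' : C)
    (bA : A ⟶ 𝟙_ C) (bA' : A' ⟶ 𝟙_ C) (bB : B ⟶ 𝟙_ C) (bB' : B' ⟶ 𝟙_ C)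
    (hA : ∀ e : A ⟶ 𝟙_ C, e = bA) (hA' : ∀ e : A' ⟶ 𝟙_ C, e = bA')
    (hB : ∀ e : B ⟶ 𝟙_ C, e = bB) (hB' : ∀ e : B' ⟶ 𝟙_ C, e = bB')
    (f : 𝟙_ C ⟶ H.hom A A' ⊗ H.hom B B')
    (g : A ⊗ B ⟶ A' ⊗ B')
    (hg : g = (λ_ (A ⊗ B)).inv ≫ (f ⊗ₘ 𝟙 (A ⊗ B)) ≫
      tensorμ (H.hom A A') (H.hom B B') A B ≫ (H.ev A A' ⊗ₘ H.ev B B')) :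
    ∃ (fA : A ⟶ A') (fB : B ⟶ B'),
      g ≫ (bA' ⊗ₘ 𝟙 B') = bA ⊗ₘ fB ∧ g ≫ (𝟙 A' ⊗ₘ bB') = fA ⊗ₘ bB :=
  stmt6_general H hnc A A' B B' bA bA' bB bB' hA hB f g hg
end

section
/- Let C be a symmetric monoidal category equipped with an insertion structure such that every insertion ε_{A,B} is completely injective and C has basic manipulations. Then the composition manipulations are associative: for all objects A, B, C, D, (comp_{A,B,C} ⊗ id_{C⇒D}) ≫ comp_{A,C,D} = α_{(A⇒B),(B⇒C),(C⇒D)} ≫ (id_{A⇒B} ⊗ comp_{B,C,D}) ≫ comp_{A,B,D}, where α is the associator. -/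
open CategoryTheory MonoidalCategory

universe v u

/-- An insertion structure on a symmetric monoidal category: to each pair of objects `A, B` it
assigns an object `hom A B` (written `A ⇒ B`), to each morphism `f : A ⟶ B` a state
`static f : I ⟶ (A ⇒ B)` (its static version), and an insertion morphism
`ε_{A,B} : (A ⇒ B) ⊗ A ⟶ B` satisfying `(f̂ ⊗ 𝟙 A) ≫ ε_{A,B} = λ_A ≫ f`. -/
structure Insertion (C : Type u) [Category.{v} C] [MonoidalCategory C] [SymmetricCategory C] where
  hom : C → C → C
  static : ∀ {A B : C}, (A ⟶ B) → (𝟙_ C ⟶ hom A B)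
  ins : ∀ A B : C, hom A B ⊗ A ⟶ B
  static_ins : ∀ {A B : C} (f : A ⟶ B), (static f ⊗ₘ 𝟙 A) ≫ ins A B = (λ_ A).hom ≫ f

namespace Insertion

variable {C : Type u} [Category.{v} C] [MonoidalCategory C] [SymmetricCategory C]

/-- Every insertion `ε_{A,B}` is completely injective: for every object `X` the map
`h ↦ (h ⊗ 𝟙 A) ≫ ε_{A,B}` on `Hom(X, A ⇒ B)` is injective. -/
def CompletelyInjective (E : Insertion C) : Prop :=
  ∀ (X A B : C), Function.Injective (fun h : X ⟶ E.hom A B => (h ⊗ₘ 𝟙 A) ≫ E.ins A B)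

/-- Double evaluation `((A ⇒ B) ⊗ (B ⇒ D)) ⊗ A ⟶ D`: after rearranging by associators and
braidings, evaluate the `(A ⇒ B)`-factor on the `A`-input via `ε_{A,B}`, then evaluate the
`(B ⇒ D)`-factor on the result via `ε_{B,D}`. -/
def doubleEval (E : Insertion C) (A B D : C) : (E.hom A B ⊗ E.hom B D) ⊗ A ⟶ D :=
  (α_ _ _ _).hom ≫ (𝟙 (E.hom A B) ⊗ₘ (β_ (E.hom B D) A).hom) ≫ (α_ _ _ _).inv ≫
    (E.ins A B ⊗ₘ 𝟙 (E.hom B D)) ≫ (β_ B (E.hom B D)).hom ≫ E.ins B D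

/-- Basic manipulations: higher order processes implementing sequential composition
`comp_{A,B,D} : (A ⇒ B) ⊗ (B ⇒ D) ⟶ (A ⇒ D)` and parallel composition
`tens_{A,A',B,B'} : (A ⇒ A') ⊗ (B ⇒ B') ⟶ ((A ⊗ B) ⇒ (A' ⊗ B'))`, characterised by their
evaluation equations. -/
structure BasicManipulations (E : Insertion C) where
  comp : ∀ A B D : C, E.hom A B ⊗ E.hom B D ⟶ E.hom A D
  tens : ∀ A A' B B' : C, E.hom A A' ⊗ E.hom B B' ⟶ E.hom (A ⊗ B) (A' ⊗ B')
  comp_eval : ∀ A B D : C, (comp A B D ⊗ₘ 𝟙 A) ≫ E.ins A D = E.doubleEval A B D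
  tens_eval : ∀ A A' B B' : C,
    (tens A A' B B' ⊗ₘ 𝟙 (A ⊗ B)) ≫ E.ins (A ⊗ B) (A' ⊗ B')
      = tensorμ (E.hom A A') (E.hom B B') A B ≫ (E.ins A A' ⊗ₘ E.ins B B')

end Insertion

/-! By complete injectivity it suffices to compare the two sides after evaluating on `A`. By symmetry,
the evaluation equation of `comp` says: swap the two process factors, then apply the first process
and then the second. Unfolding both sides this way, each becomes "apply the three processes in
sequence" preceded by a rearrangement of the process factors, and the two rearrangements agree by
the hexagon identities. -/

namespace CategoryTheory.BraidedCategory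

variable {C : Type u} [Category.{v} C] [MonoidalCategory C] [BraidedCategory C]

theorem braiding_tensor_left_hom_comp_whiskerLeft_braiding (X Y Z : C) :
    (β_ (X ⊗ Y) Z).hom ≫ Z ◁ (β_ X Y).hom =
      (α_ X Y Z).hom ≫ (β_ X (Y ⊗ Z)).hom ≫ (β_ Y Z).hom ▷ X ≫ (α_ Z Y X).hom := by
  rw [← braiding_naturality_right_assoc, braiding_tensor_left_hom, braiding_tensor_right_hom]
  simp

end CategoryTheory.BraidedCategory

namespace Insertion

variable {C : Type u} [Category.{v} C] [MonoidalCategory C] [SymmetricCategory C] (E : Insertion C)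

theorem doubleEval_eq (A B D : C) :
    E.doubleEval A B D = (β_ (E.hom A B) (E.hom B D)).hom ▷ A ≫ (α_ _ _ _).hom ≫
      E.hom B D ◁ E.ins A B ≫ E.ins B D := by
  rw [doubleEval, tensorHom_id, id_tensorHom, BraidedCategory.braiding_naturality_left_assoc,
    BraidedCategory.braiding_tensor_left_hom]
  simp only [Category.assoc, Iso.inv_hom_id_assoc]
  rw [← whiskerLeft_comp_assoc, SymmetricCategory.symmetry]
  simp

def tripleEval (A B D D' : C) :
    ((E.hom A B ⊗ E.hom B D) ⊗ E.hom D D') ⊗ A ⟶ D' :=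
  ((β_ (E.hom A B ⊗ E.hom B D) (E.hom D D')).hom ≫ E.hom D D' ◁ (β_ _ _).hom) ▷ A ≫
    (α_ _ _ _).hom ≫ E.hom D D' ◁ (α_ _ _ _).hom ≫ E.hom D D' ◁ E.hom B D ◁ E.ins A B ≫
    E.hom D D' ◁ E.ins B D ≫ E.ins D D'

namespace BasicManipulations

variable {E} (bm : E.BasicManipulations)

theorem comp_whiskerRight_ins (A B D : C) :
    bm.comp A B D ▷ A ≫ E.ins A D = (β_ (E.hom A B) (E.hom B D)).hom ▷ A ≫ (α_ _ _ _).hom ≫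
      E.hom B D ◁ E.ins A B ≫ E.ins B D := by
  rw [← tensorHom_id, bm.comp_eval, E.doubleEval_eq]

theorem comp_whiskerRight_comp_whiskerRight_ins (A B D D' : C) :
    (bm.comp A B D ▷ E.hom D D' ≫ bm.comp A D D') ▷ A ≫ E.ins A D' = E.tripleEval A B D D' := by
  rw [comp_whiskerRight, Category.assoc, comp_whiskerRight_ins, ← comp_whiskerRight_assoc,
    BraidedCategory.braiding_naturality_left, comp_whiskerRight_assoc,
    associator_naturality_middle_assoc, ← whiskerLeft_comp_assoc, comp_whiskerRight_ins]
  simp [tripleEval]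

theorem associator_comp_whiskerLeft_comp_whiskerRight_ins (A B D D' : C) :
    ((α_ _ _ _).hom ≫ E.hom A B ◁ bm.comp B D D' ≫ bm.comp A B D') ▷ A ≫ E.ins A D' =
      E.tripleEval A B D D' := by
  simp only [comp_whiskerRight, Category.assoc, comp_whiskerRight_ins]
  rw [← comp_whiskerRight_assoc (E.hom A B ◁ bm.comp B D D'),
    BraidedCategory.braiding_naturality_right, comp_whiskerRight_assoc,
    associator_naturality_left_assoc, ← whisker_exchange_assoc, comp_whiskerRight_ins,
    whisker_exchange_assoc, associator_naturality_right_assoc, tripleEval,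
    BraidedCategory.braiding_tensor_left_hom_comp_whiskerLeft_braiding]
  simp

end BasicManipulations

end Insertion

/-- the composition manipulations are associative. -/
theorem stmt16 {C : Type u} [Category.{v} C] [MonoidalCategory C] [SymmetricCategory C]
    (E : Insertion C) (hinj : E.CompletelyInjective) (bm : E.BasicManipulations) :
    ∀ A B D D' : C,
      (bm.comp A B D ⊗ₘ 𝟙 (E.hom D D')) ≫ bm.comp A D D'
        = (α_ (E.hom A B) (E.hom B D) (E.hom D D')).hom ≫
            (𝟙 (E.hom A B) ⊗ₘ bm.comp B D D') ≫ bm.comp A B D' := by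
  intro A B D D'
  apply hinj
  simp only [tensorHom_id, id_tensorHom]
  rw [bm.comp_whiskerRight_comp_whiskerRight_ins,
    bm.associator_comp_whiskerLeft_comp_whiskerRight_ins]
end

section
/- Let C be a symmetric monoidal category equipped with an insertion structure such that every insertion ε_{A,B} is completely injective and C has basic manipulations. For f : A' ⟶ A and g : B ⟶ B', define (f ⇒ g) : (A ⇒ B) ⟶ (A' ⇒ B') to be the morphism that pre-composes with the static f̂ and post-composes with the static ĝ via the composition manipulations, i.e. (f ⇒ g) = λ⁻¹ ≫ (f̂ ⊗ id_{A⇒B}) ≫ comp_{A',A,B} then ρ⁻¹ ≫ (id ⊗ ĝ) ≫ comp_{A',B,B'}. Then the assignment is bifunctorial: (id_A ⇒ id_B) = id_{A⇒B}, and for f' : A'' ⟶ A' and g' : B' ⟶ B'', (f ⇒ g) ≫ (f' ⇒ g') = ((f' ≫ f) ⇒ (g ≫ g')). In particular, if f and g are isomorphisms then f ⇒ g is an isomorphism. -/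
open CategoryTheory MonoidalCategory

universe v u

/-- `f ⇒ g : (A ⇒ B) ⟶ (A' ⇒ B')`: pre-composition with the static `f̂` and post-composition
with the static `ĝ` via the composition manipulations. -/
def Insertion.homMap {C : Type u} [Category.{v} C] [MonoidalCategory C] [SymmetricCategory C]
    (E : Insertion C) (bm : E.BasicManipulations) {A A' B B' : C}
    (f : A' ⟶ A) (g : B ⟶ B') : E.hom A B ⟶ E.hom A' B' :=
  ((λ_ (E.hom A B)).inv ≫ (E.static f ⊗ₘ 𝟙 (E.hom A B)) ≫ bm.comp A' A B) ≫
    ((ρ_ (E.hom A' B)).inv ≫ (𝟙 (E.hom A' B) ⊗ₘ E.static g) ≫ bm.comp A' B B')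

/-! Pre- and post-composition with statics are characterised by their evaluations: the evaluation
equation of `comp` and `(f̂ ⊗ 𝟙) ≫ ε = λ ≫ f` give `((f ⇒ g) ⊗ 𝟙) ≫ ε = (𝟙 ⊗ f) ≫ ε ≫ g`.
Both functoriality equations therefore hold after evaluation, and complete injectivity of `ε`
removes the evaluation. -/

section Braided

variable {C : Type u} [Category.{v} C] [MonoidalCategory C] [BraidedCategory C]

lemma leftUnitor_conj_braiding (X Y : C) :
    (λ_ X).inv ▷ Y ≫ (α_ _ X Y).hom ≫ 𝟙_ C ◁ (β_ X Y).hom ≫ (α_ _ Y X).inv ≫ (λ_ Y).hom ▷ X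
      = (β_ X Y).hom := by
  rw [← leftUnitor_tensor_hom, leftUnitor_naturality]
  monoidal

lemma rightUnitor_conj_braiding_tensorUnit_left (X Y : C) :
    (ρ_ X).inv ▷ Y ≫ (α_ X _ Y).hom ≫ X ◁ (β_ (𝟙_ C) Y).hom ≫ (α_ X Y _).inv ≫ (ρ_ (X ⊗ Y)).hom
      = 𝟙 (X ⊗ Y) := by
  rw [braiding_tensorUnit_left]
  monoidal

end Braided

namespace Insertion

variable {C : Type u} [Category.{v} C] [MonoidalCategory C] [SymmetricCategory C]

lemma CompletelyInjective.ext {E : Insertion C} (hinj : E.CompletelyInjective) {X A B : C}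
    {h k : X ⟶ E.hom A B} (w : h ▷ A ≫ E.ins A B = k ▷ A ≫ E.ins A B) : h = k :=
  hinj X A B (by simpa using w)

variable (E : Insertion C) (bm : E.BasicManipulations)

lemma static_whiskerRight_ins {A B : C} (f : A ⟶ B) :
    E.static f ▷ A ≫ E.ins A B = (λ_ A).hom ≫ f := by
  simpa using E.static_ins f

lemma comp_whiskerRight_ins (A B D : C) :
    bm.comp A B D ▷ A ≫ E.ins A D = E.doubleEval A B D := by
  simpa using bm.comp_eval A B D

def precomp {A A' : C} (f : A' ⟶ A) (B : C) : E.hom A B ⟶ E.hom A' B :=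
  (λ_ (E.hom A B)).inv ≫ (E.static f ⊗ₘ 𝟙 (E.hom A B)) ≫ bm.comp A' A B

def postcomp (A : C) {B B' : C} (g : B ⟶ B') : E.hom A B ⟶ E.hom A B' :=
  (ρ_ (E.hom A B)).inv ≫ (𝟙 (E.hom A B) ⊗ₘ E.static g) ≫ bm.comp A B B'

lemma homMap_eq_precomp_comp_postcomp {A A' B B' : C} (f : A' ⟶ A) (g : B ⟶ B') :
    E.homMap bm f g = E.precomp bm f B ≫ E.postcomp bm A' g :=
  rfl

lemma precomp_whiskerRight_ins {A A' : C} (f : A' ⟶ A) (B : C) :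
    E.precomp bm f B ▷ A' ≫ E.ins A' B = E.hom A B ◁ f ≫ E.ins A B := by
  simp only [precomp, tensorHom_id, comp_whiskerRight, Category.assoc, comp_whiskerRight_ins,
    doubleEval, id_tensorHom]
  rw [associator_naturality_left_assoc, ← whisker_exchange_assoc,
    associator_inv_naturality_left_assoc, ← comp_whiskerRight_assoc, static_whiskerRight_ins,
    comp_whiskerRight_assoc, BraidedCategory.braiding_naturality_left_assoc,
    reassoc_of% leftUnitor_conj_braiding, SymmetricCategory.symmetry_assoc]

lemma postcomp_whiskerRight_ins (A : C) {B B' : C} (g : B ⟶ B') :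
    E.postcomp bm A g ▷ A ≫ E.ins A B' = E.ins A B ≫ g := by
  simp only [postcomp, id_tensorHom, comp_whiskerRight, Category.assoc, comp_whiskerRight_ins,
    doubleEval, tensorHom_id]
  rw [associator_naturality_middle_assoc, ← whiskerLeft_comp_assoc,
    BraidedCategory.braiding_naturality_left, whiskerLeft_comp_assoc,
    associator_inv_naturality_right_assoc, whisker_exchange_assoc,
    BraidedCategory.braiding_naturality_right_assoc, static_whiskerRight_ins,
    braiding_leftUnitor_assoc, rightUnitor_naturality_assoc,
    reassoc_of% rightUnitor_conj_braiding_tensorUnit_left]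

lemma homMap_whiskerRight_ins {A A' B B' : C} (f : A' ⟶ A) (g : B ⟶ B') :
    E.homMap bm f g ▷ A' ≫ E.ins A' B' = E.hom A B ◁ f ≫ E.ins A B ≫ g := by
  rw [homMap_eq_precomp_comp_postcomp, comp_whiskerRight_assoc, postcomp_whiskerRight_ins,
    reassoc_of% precomp_whiskerRight_ins]

variable {E}

lemma homMap_id (hinj : E.CompletelyInjective) (A B : C) :
    E.homMap bm (𝟙 A) (𝟙 B) = 𝟙 (E.hom A B) :=
  hinj.ext <| by simp [homMap_whiskerRight_ins]

lemma homMap_comp (hinj : E.CompletelyInjective) {A A' A'' B B' B'' : C} (f : A' ⟶ A)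
    (g : B ⟶ B') (f' : A'' ⟶ A') (g' : B' ⟶ B'') :
    E.homMap bm f g ≫ E.homMap bm f' g' = E.homMap bm (f' ≫ f) (g ≫ g') :=
  hinj.ext <| by
    rw [comp_whiskerRight_assoc, homMap_whiskerRight_ins, ← whisker_exchange_assoc,
      reassoc_of% homMap_whiskerRight_ins, homMap_whiskerRight_ins, whiskerLeft_comp_assoc]

lemma isIso_homMap (hinj : E.CompletelyInjective) {A A' B B' : C} (f : A' ⟶ A) (g : B ⟶ B')
    [IsIso f] [IsIso g] :
    IsIso (E.homMap bm f g) :=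
  ⟨E.homMap bm (inv f) (inv g), by simp [homMap_comp bm hinj, homMap_id bm hinj],
    by simp [homMap_comp bm hinj, homMap_id bm hinj]⟩

end Insertion

/-- the assignment `(f, g) ↦ (f ⇒ g)` is bifunctorial; in particular it
preserves isomorphisms. -/
theorem stmt18 {C : Type u} [Category.{v} C] [MonoidalCategory C] [SymmetricCategory C]
    (E : Insertion C) (hinj : E.CompletelyInjective) (bm : E.BasicManipulations) :
    (∀ A B : C, E.homMap bm (𝟙 A) (𝟙 B) = 𝟙 (E.hom A B)) ∧
    (∀ {A A' A'' B B' B'' : C} (f : A' ⟶ A) (g : B ⟶ B') (f' : A'' ⟶ A') (g' : B' ⟶ B''),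
      E.homMap bm f g ≫ E.homMap bm f' g' = E.homMap bm (f' ≫ f) (g ≫ g')) ∧
    (∀ {A A' B B' : C} (f : A' ⟶ A) (g : B ⟶ B'),
      IsIso f → IsIso g → IsIso (E.homMap bm f g)) :=
  ⟨Insertion.homMap_id bm hinj, Insertion.homMap_comp bm hinj,
    fun f g _ _ => Insertion.isIso_homMap bm hinj f g⟩
end
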